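/- Let V be a double Poisson algebra with 2-fold bracket {{−,−}}, and set {a,b} := m{{a,b}} ∈ V. Then for all a,b,c ∈ V: (i) {a,b} + {b,a} ∈ [V,V]; (ii) {a,{b,c}} − {b,{a,c}} = {{a,b},c} (an exact identity in V). Consequently V/[V,V], with bracket [tr a, tr b] := tr{a,b}, is a Lie algebra over 𝔽, and (tr a, b) ↦ {a,b} defines a representation of this Lie algebra on V by derivations of the associative product of V. -/

import Mathlib

open TensorProduct LinearMap

section DPA

variable (𝔽 : Type) [Field 𝔽] (V : Type) [Ring V] [Algebra 𝔽 V]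

/-- The swap `(u ⊗ v)^σ = v ⊗ u` on `V ⊗ V`. -/
noncomputable abbrev swap2 : V ⊗[𝔽] V ≃ₗ[𝔽] V ⊗[𝔽] V := TensorProduct.comm 𝔽 V V

/-- The cyclic permutation `(u ⊗ v ⊗ w)^σ = w ⊗ u ⊗ v` on `V ⊗ V ⊗ V = (V ⊗ V) ⊗ V`. -/
noncomputable def sigma3 : (V ⊗[𝔽] V) ⊗[𝔽] V ≃ₗ[𝔽] (V ⊗[𝔽] V) ⊗[𝔽] V :=
  (TensorProduct.comm 𝔽 (V ⊗[𝔽] V) V).trans (TensorProduct.assoc 𝔽 V V V).symm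

/-- Left multiplication `a · (u ⊗ v) = (a*u) ⊗ v` (outer bimodule structure). -/
noncomputable def lact2 (a : V) : V ⊗[𝔽] V →ₗ[𝔽] V ⊗[𝔽] V :=
  LinearMap.rTensor V (LinearMap.mulLeft 𝔽 a)

/-- Right multiplication `(u ⊗ v) · c = u ⊗ (v*c)` (outer bimodule structure). -/
noncomputable def ract2 (c : V) : V ⊗[𝔽] V →ₗ[𝔽] V ⊗[𝔽] V :=
  LinearMap.lTensor V (LinearMap.mulRight 𝔽 c)

/-- `(u ⊗ v) ⋆₁ b = (u*b) ⊗ v`. -/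
noncomputable def star1r (b : V) : V ⊗[𝔽] V →ₗ[𝔽] V ⊗[𝔽] V :=
  LinearMap.rTensor V (LinearMap.mulRight 𝔽 b)

/-- `a ⋆₁ (u ⊗ v) = u ⊗ (a*v)`. -/
noncomputable def star1l (a : V) : V ⊗[𝔽] V →ₗ[𝔽] V ⊗[𝔽] V :=
  LinearMap.lTensor V (LinearMap.mulLeft 𝔽 a)

/-- The `•`-product on `V ⊗ V`:  `(u ⊗ v) • (x ⊗ y) = (u*x) ⊗ (y*v)`
(the multiplication of `V ⊗ Vᵒᵖ`). -/
noncomputable def bullet : V ⊗[𝔽] V →ₗ[𝔽] V ⊗[𝔽] V →ₗ[𝔽] V ⊗[𝔽] V :=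
  TensorProduct.lift
    (((TensorProduct.mapBilinear (RingHom.id 𝔽) V V V V).comp (LinearMap.mul 𝔽 V)).compl₂
      ((LinearMap.mul 𝔽 V).flip))

/-- A `2`-fold bracket on `V`: an `𝔽`-bilinear map `V × V → V ⊗ V` satisfying the two
Leibniz rules `{{a,bc}} = {{a,b}}·c + b·{{a,c}}` and `{{ab,c}} = {{a,c}} ⋆₁ b + a ⋆₁ {{b,c}}`. -/
def IsDoubleBracket (Br : V →ₗ[𝔽] V →ₗ[𝔽] V ⊗[𝔽] V) : Prop :=
  (∀ a b c : V, Br a (b * c) = ract2 𝔽 V c (Br a b) + lact2 𝔽 V b (Br a c)) ∧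
  (∀ a b c : V, Br (a * b) c = star1r 𝔽 V b (Br a c) + star1l 𝔽 V a (Br b c))

variable {𝔽 V}

/-- `{{a, B}}_L` : apply the bracket to the first tensor factor. -/
noncomputable def brL (Br : V →ₗ[𝔽] V →ₗ[𝔽] V ⊗[𝔽] V) (a : V) :
    V ⊗[𝔽] V →ₗ[𝔽] (V ⊗[𝔽] V) ⊗[𝔽] V :=
  LinearMap.rTensor V (Br a)

/-- `{{a, B}}_R` : apply the bracket to the second tensor factor. -/
noncomputable def brR (Br : V →ₗ[𝔽] V →ₗ[𝔽] V ⊗[𝔽] V) (a : V) :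
    V ⊗[𝔽] V →ₗ[𝔽] (V ⊗[𝔽] V) ⊗[𝔽] V :=
  (TensorProduct.assoc 𝔽 V V V).symm.toLinearMap ∘ₗ LinearMap.lTensor V (Br a)

variable (𝔽 V)

/-- `ρ₂` : swap the last two tensor factors of `V ⊗ V ⊗ V`. -/
noncomputable def rho2 : (V ⊗[𝔽] V) ⊗[𝔽] V ≃ₗ[𝔽] (V ⊗[𝔽] V) ⊗[𝔽] V :=
  (TensorProduct.assoc 𝔽 V V V).trans
    ((TensorProduct.congr (LinearEquiv.refl 𝔽 V) (TensorProduct.comm 𝔽 V V)).trans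
      (TensorProduct.assoc 𝔽 V V V).symm)

variable {𝔽 V}

/-- Conjugated bullet action used to define the actions `•ᵢ` of `V ⊗ V` on `V ⊗ V ⊗ V`. -/
noncomputable def conjAct (β : V ⊗[𝔽] V →ₗ[𝔽] V ⊗[𝔽] V →ₗ[𝔽] V ⊗[𝔽] V)
    (ρ : (V ⊗[𝔽] V) ⊗[𝔽] V ≃ₗ[𝔽] (V ⊗[𝔽] V) ⊗[𝔽] V) :
    V ⊗[𝔽] V →ₗ[𝔽] (V ⊗[𝔽] V) ⊗[𝔽] V →ₗ[𝔽] (V ⊗[𝔽] V) ⊗[𝔽] V :=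
  (LinearMap.lcomp 𝔽 _ ρ.toLinearMap) ∘ₗ
    (LinearMap.llcomp 𝔽 ((V ⊗[𝔽] V) ⊗[𝔽] V) ((V ⊗[𝔽] V) ⊗[𝔽] V) ((V ⊗[𝔽] V) ⊗[𝔽] V)
      ρ.symm.toLinearMap) ∘ₗ
    (LinearMap.rTensorHom V) ∘ₗ β

variable (𝔽 V)

/-- The right action `X •₁ A`, i.e. `(x⊗y⊗z) •₁ (a⊗b) = x⊗(y*a)⊗(b*z)`;
`bAct1R A X = X •₁ A`. -/
noncomputable def bAct1R : V ⊗[𝔽] V →ₗ[𝔽] (V ⊗[𝔽] V) ⊗[𝔽] V →ₗ[𝔽] (V ⊗[𝔽] V) ⊗[𝔽] V :=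
  conjAct (bullet 𝔽 V).flip ((sigma3 𝔽 V).trans (sigma3 𝔽 V))

/-- The left action `A •₂ X`, i.e. `(a⊗b) •₂ (x⊗y⊗z) = (a*x)⊗y⊗(z*b)`. -/
noncomputable def bAct2L : V ⊗[𝔽] V →ₗ[𝔽] (V ⊗[𝔽] V) ⊗[𝔽] V →ₗ[𝔽] (V ⊗[𝔽] V) ⊗[𝔽] V :=
  conjAct (bullet 𝔽 V) (rho2 𝔽 V)

/-- The right action `X •₃ A`, i.e. `(x⊗y⊗z) •₃ (a⊗b) = (x*a)⊗(b*y)⊗z`;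
`bAct3R A X = X •₃ A`. -/
noncomputable def bAct3R : V ⊗[𝔽] V →ₗ[𝔽] (V ⊗[𝔽] V) ⊗[𝔽] V →ₗ[𝔽] (V ⊗[𝔽] V) ⊗[𝔽] V :=
  conjAct (bullet 𝔽 V).flip (LinearEquiv.refl 𝔽 ((V ⊗[𝔽] V) ⊗[𝔽] V))

/-- `a ⋆₁ (x⊗y⊗z) = x⊗(a*y)⊗z`. -/
noncomputable def slot2L (a : V) : (V ⊗[𝔽] V) ⊗[𝔽] V →ₗ[𝔽] (V ⊗[𝔽] V) ⊗[𝔽] V :=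
  LinearMap.rTensor V (LinearMap.lTensor V (LinearMap.mulLeft 𝔽 a))

/-- `(x⊗y⊗z) ⋆₁ b = x⊗(y*b)⊗z`. -/
noncomputable def slot2R (b : V) : (V ⊗[𝔽] V) ⊗[𝔽] V →ₗ[𝔽] (V ⊗[𝔽] V) ⊗[𝔽] V :=
  LinearMap.rTensor V (LinearMap.lTensor V (LinearMap.mulRight 𝔽 b))

/-- `a ⋆₂ (x⊗y⊗z) = x⊗y⊗(a*z)`. -/
noncomputable def slot3L (a : V) : (V ⊗[𝔽] V) ⊗[𝔽] V →ₗ[𝔽] (V ⊗[𝔽] V) ⊗[𝔽] V :=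
  LinearMap.lTensor (V ⊗[𝔽] V) (LinearMap.mulLeft 𝔽 a)

/-- `(x⊗y⊗z) ⋆₂ b = (x*b)⊗y⊗z`. -/
noncomputable def slot1R (b : V) : (V ⊗[𝔽] V) ⊗[𝔽] V →ₗ[𝔽] (V ⊗[𝔽] V) ⊗[𝔽] V :=
  LinearMap.rTensor V (LinearMap.rTensor V (LinearMap.mulRight 𝔽 b))

/-- outer left: `a · (x⊗y⊗z) = (a*x)⊗y⊗z`. -/
noncomputable def slot1L (a : V) : (V ⊗[𝔽] V) ⊗[𝔽] V →ₗ[𝔽] (V ⊗[𝔽] V) ⊗[𝔽] V :=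
  LinearMap.rTensor V (LinearMap.rTensor V (LinearMap.mulLeft 𝔽 a))

/-- outer right: `(x⊗y⊗z) · b = x⊗y⊗(z*b)`. -/
noncomputable def slot3R (b : V) : (V ⊗[𝔽] V) ⊗[𝔽] V →ₗ[𝔽] (V ⊗[𝔽] V) ⊗[𝔽] V :=
  LinearMap.lTensor (V ⊗[𝔽] V) (LinearMap.mulRight 𝔽 b)

variable {𝔽 V}

/-- The triple bracket `{{a,b,c}}`. -/
noncomputable def triple (Br : V →ₗ[𝔽] V →ₗ[𝔽] V ⊗[𝔽] V) (a b c : V) :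
    (V ⊗[𝔽] V) ⊗[𝔽] V :=
  brL Br a (Br b c) + sigma3 𝔽 V (brL Br b (Br c a)) +
    sigma3 𝔽 V (sigma3 𝔽 V (brL Br c (Br a b)))

variable (𝔽 V)

/-- Skewsymmetry of a 2-fold bracket. -/
def IsSkew (Br : V →ₗ[𝔽] V →ₗ[𝔽] V ⊗[𝔽] V) : Prop :=
  ∀ a b : V, Br a b = - swap2 𝔽 V (Br b a)

/-- The span of commutators `[V,V]`. -/
def commSub : Submodule 𝔽 V := Submodule.span 𝔽 {x : V | ∃ a b : V, x = a * b - b * a}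

variable {𝔽 V}

/-- The associated bracket `{a,b} = m {{a,b}}`. -/
noncomputable def sb (Br : V →ₗ[𝔽] V →ₗ[𝔽] V ⊗[𝔽] V) (a b : V) : V :=
  LinearMap.mul' 𝔽 V (Br a b)

/-- A 2-fold derivation: `D(ab) = (Da)·b + a·(Db)`. -/
def Is2Deriv (D : V →ₗ[𝔽] V ⊗[𝔽] V) : Prop :=
  ∀ a b : V, D (a * b) = ract2 𝔽 V b (D a) + lact2 𝔽 V a (D b)

/-- `D` and `E` strongly commute: `D_L ∘ E = E_R ∘ D`. -/
def StronglyComm (D E : V →ₗ[𝔽] V ⊗[𝔽] V) : Prop :=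
  ∀ f : V, LinearMap.rTensor V D (E f) =
    (TensorProduct.assoc 𝔽 V V V).symm (LinearMap.lTensor V E (D f))
end DPA

/-! Apply the full multiplication `mul3 : V ⊗ V ⊗ V → V` to the Jacobi identity. The left
Leibniz rule gives `{a, m B} = mul3 {{a, B}}_L + mul3 {{a, B}}_R`; the right Leibniz rule and
skewsymmetry express `{m X, c}` through `mul3 σ²{{c, X}}_L` and `mul3 σ²{{c, X^σ}}_L`, and
skewsymmetry turns the `σ`-term of the Jacobi identity into an `_R`-term. Subtracting the
identities for `(a, b, c)` and `(b, a, c)` then gives (ii) exactly.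
Part (i) holds because `{b, a} = -m({{a,b}}^σ)` and `m X - m X^σ` is a sum of commutators.
As `{-,-}` kills `[V,V]` in its first argument and is a derivation in its second, it descends to
`V/[V,V]`, where (i) and (ii) become antisymmetry, Jacobi and the representation property. -/

section Multiplication

variable {𝔽 : Type} [Field 𝔽] {V : Type} [Ring V] [Algebra 𝔽 V]

noncomputable def mul3 : (V ⊗[𝔽] V) ⊗[𝔽] V →ₗ[𝔽] V :=
  mul' 𝔽 V ∘ₗ rTensor V (mul' 𝔽 V)

lemma mul3_tmul (X : V ⊗[𝔽] V) (v : V) : mul3 (X ⊗ₜ v) = mul' 𝔽 V X * v := by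
  simp [mul3]

lemma mul3_assoc_symm_tmul (u : V) (X : V ⊗[𝔽] V) :
    mul3 ((TensorProduct.assoc 𝔽 V V V).symm (u ⊗ₜ X)) = u * mul' 𝔽 V X := by
  induction X using TensorProduct.induction_on with
  | zero => simp
  | tmul x y => simp [mul3, mul_assoc]
  | add X Y hX hY => simp only [tmul_add, map_add, hX, hY, mul_add]

lemma mul3_sigma3_tmul (X : V ⊗[𝔽] V) (v : V) :
    mul3 (sigma3 𝔽 V (X ⊗ₜ v)) = v * mul' 𝔽 V X := by
  rw [sigma3, LinearEquiv.trans_apply, TensorProduct.comm_tmul, mul3_assoc_symm_tmul]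

lemma mul3_sigma3_sigma3_comm_tmul (X : V ⊗[𝔽] V) (v : V) :
    mul3 (sigma3 𝔽 V (sigma3 𝔽 V (swap2 𝔽 V X ⊗ₜ v))) = mul' 𝔽 V (star1r 𝔽 V v X) := by
  induction X using TensorProduct.induction_on with
  | zero => simp
  | tmul s t => simp [sigma3, star1r, mul3, mul_assoc]
  | add X Y hX hY => simp only [map_add, add_tmul, hX, hY]

lemma mul'_ract2 (v : V) (X : V ⊗[𝔽] V) : mul' 𝔽 V (ract2 𝔽 V v X) = mul' 𝔽 V X * v := by
  induction X using TensorProduct.induction_on with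
  | zero => simp
  | tmul x y => simp [ract2, mul_assoc]
  | add X Y hX hY => simp only [map_add, hX, hY, add_mul]

lemma mul'_lact2 (u : V) (X : V ⊗[𝔽] V) : mul' 𝔽 V (lact2 𝔽 V u X) = u * mul' 𝔽 V X := by
  induction X using TensorProduct.induction_on with
  | zero => simp
  | tmul x y => simp [lact2, mul_assoc]
  | add X Y hX hY => simp only [map_add, hX, hY, mul_add]

lemma mul'_star1l (v : V) (X : V ⊗[𝔽] V) :
    mul' 𝔽 V (star1l 𝔽 V v X) = mul' 𝔽 V (star1r 𝔽 V v X) := by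
  induction X using TensorProduct.induction_on with
  | zero => simp
  | tmul x y => simp [star1l, star1r, mul_assoc]
  | add X Y hX hY => simp only [map_add, hX, hY]

lemma mul'_sub_mul'_comm_mem_commSub (X : V ⊗[𝔽] V) :
    mul' 𝔽 V X - mul' 𝔽 V (swap2 𝔽 V X) ∈ commSub 𝔽 V := by
  induction X using TensorProduct.induction_on with
  | zero => simp
  | tmul u v => exact Submodule.subset_span ⟨u, v, rfl⟩
  | add X Y hX hY => simpa only [map_add, add_sub_add_comm] using add_mem hX hY

lemma commSub_le_comap {D : V →ₗ[𝔽] V} (hD : ∀ u w, D (u * w) = D u * w + u * D w) :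
    commSub 𝔽 V ≤ (commSub 𝔽 V).comap D := by
  refine Submodule.span_le.mpr ?_
  rintro _ ⟨u, w, rfl⟩
  have hsplit : D (u * w - w * u) = (D u * w - w * D u) + (u * D w - D w * u) := by
    rw [map_sub, hD, hD]; abel
  rw [SetLike.mem_coe, Submodule.mem_comap, hsplit]
  exact add_mem (Submodule.subset_span ⟨_, _, rfl⟩) (Submodule.subset_span ⟨_, _, rfl⟩)

end Multiplication

section Bracket

variable {𝔽 : Type} [Field 𝔽] {V : Type} [Ring V] [Algebra 𝔽 V]
  {Br : V →ₗ[𝔽] V →ₗ[𝔽] V ⊗[𝔽] V}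

lemma sb_mul_right (hBr : IsDoubleBracket 𝔽 V Br) (a u w : V) :
    sb Br a (u * w) = sb Br a u * w + u * sb Br a w := by
  rw [sb, sb, sb, hBr.1, map_add, mul'_ract2, mul'_lact2]

lemma sb_mul_comm_left (hBr : IsDoubleBracket 𝔽 V Br) (x y b : V) :
    sb Br (x * y) b = sb Br (y * x) b := by
  rw [sb, sb, hBr.2, hBr.2, map_add, map_add, mul'_star1l, mul'_star1l, add_comm]

lemma sb_add_sb_mem_commSub (hskew : IsSkew 𝔽 V Br) (a b : V) :
    sb Br a b + sb Br b a ∈ commSub 𝔽 V := by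
  rw [sb, sb, hskew b a, map_neg, ← sub_eq_add_neg]
  exact mul'_sub_mul'_comm_mem_commSub (Br a b)

lemma sb_mul'_right (hBr : IsDoubleBracket 𝔽 V Br) (a : V) (B : V ⊗[𝔽] V) :
    sb Br a (mul' 𝔽 V B) = mul3 (brL Br a B) + mul3 (brR Br a B) := by
  induction B using TensorProduct.induction_on with
  | zero => simp [sb]
  | tmul u v =>
    rw [mul'_apply, sb_mul_right hBr, brL, brR, rTensor_tmul, comp_apply, lTensor_tmul,
      LinearEquiv.coe_coe, mul3_tmul, mul3_assoc_symm_tmul, sb, sb]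
  | add X Y hX hY =>
    simp only [sb, map_add] at hX hY ⊢
    rw [hX, hY]
    abel

lemma mul3_sigma3_brL_comm (b : V) (X : V ⊗[𝔽] V) :
    mul3 (sigma3 𝔽 V (brL Br b (swap2 𝔽 V X))) = mul3 (brR Br b X) := by
  induction X using TensorProduct.induction_on with
  | zero => simp
  | tmul p q =>
    rw [TensorProduct.comm_tmul, brL, rTensor_tmul, mul3_sigma3_tmul, brR, comp_apply,
      lTensor_tmul, LinearEquiv.coe_coe, mul3_assoc_symm_tmul]
  | add X Y hX hY => simp only [map_add, hX, hY]

lemma sb_mul'_left (hBr : IsDoubleBracket 𝔽 V Br) (hskew : IsSkew 𝔽 V Br) (c : V)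
    (X : V ⊗[𝔽] V) :
    sb Br (mul' 𝔽 V X) c = - mul3 (sigma3 𝔽 V (sigma3 𝔽 V (brL Br c X)))
      - mul3 (sigma3 𝔽 V (sigma3 𝔽 V (brL Br c (swap2 𝔽 V X)))) := by
  induction X using TensorProduct.induction_on with
  | zero => simp [sb]
  | tmul x y =>
    rw [mul'_apply, sb, hBr.2, map_add, mul'_star1l, TensorProduct.comm_tmul, brL, rTensor_tmul,
      rTensor_tmul, hskew c x, hskew c y]
    simp only [neg_tmul, map_neg, mul3_sigma3_sigma3_comm_tmul]
    abel
  | add X Y hX hY =>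
    simp only [sb, map_add, LinearMap.add_apply] at hX hY ⊢
    rw [hX, hY]
    abel

lemma mul3_triple (hskew : IsSkew 𝔽 V Br) (a b c : V) :
    mul3 (triple Br a b c) = mul3 (brL Br a (Br b c)) - mul3 (brR Br b (Br a c))
      + mul3 (sigma3 𝔽 V (sigma3 𝔽 V (brL Br c (Br a b)))) := by
  rw [triple, hskew c a, map_neg, map_neg, map_add, map_add, map_neg, mul3_sigma3_brL_comm,
    ← sub_eq_add_neg]

lemma sb_sb_sub_sb_sb (hBr : IsDoubleBracket 𝔽 V Br) (hskew : IsSkew 𝔽 V Br)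
    (hJac : ∀ a b c : V, triple Br a b c = 0) (a b c : V) :
    sb Br a (sb Br b c) - sb Br b (sb Br a c) = sb Br (sb Br a b) c := by
  have jac_abc := congrArg mul3 (hJac a b c)
  have jac_bac := congrArg mul3 (hJac b a c)
  rw [mul3_triple hskew, map_zero] at jac_abc jac_bac
  rw [hskew b a] at jac_bac
  simp only [map_neg] at jac_bac
  have expand_bc := sb_mul'_right hBr a (Br b c)
  have expand_ac := sb_mul'_right hBr b (Br a c)
  have expand_ab := sb_mul'_left hBr hskew c (Br a b)
  unfold sb at expand_bc expand_ac expand_ab ⊢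
  rw [expand_bc, expand_ac, expand_ab]
  linear_combination (norm := abel) jac_abc - jac_bac

end Bracket

section Trace

variable {𝔽 : Type} [Field 𝔽] {V : Type} [Ring V] [Algebra 𝔽 V]
  {Br : V →ₗ[𝔽] V →ₗ[𝔽] V ⊗[𝔽] V}

noncomputable def sbLin (Br : V →ₗ[𝔽] V →ₗ[𝔽] V ⊗[𝔽] V) : V →ₗ[𝔽] V →ₗ[𝔽] V :=
  Br.compr₂ (mul' 𝔽 V)

lemma commSub_le_ker_sbLin (hBr : IsDoubleBracket 𝔽 V Br) : commSub 𝔽 V ≤ ker (sbLin Br) := by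
  refine Submodule.span_le.mpr ?_
  rintro _ ⟨x, y, rfl⟩
  rw [SetLike.mem_coe, mem_ker, map_sub, sub_eq_zero]
  ext b
  exact sb_mul_comm_left hBr x y b

noncomputable def trRep (hBr : IsDoubleBracket 𝔽 V Br) : (V ⧸ commSub 𝔽 V) →ₗ[𝔽] V →ₗ[𝔽] V :=
  (commSub 𝔽 V).liftQ (sbLin Br) (commSub_le_ker_sbLin hBr)

noncomputable def trBracket (hBr : IsDoubleBracket 𝔽 V Br) :
    (V ⧸ commSub 𝔽 V) →ₗ[𝔽] (V ⧸ commSub 𝔽 V) →ₗ[𝔽] (V ⧸ commSub 𝔽 V) :=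
  ((sbLin Br).compr₂ (commSub 𝔽 V).mkQ).liftQ₂ _ _
    (fun _ hx ↦ by ext; simp [mem_ker.mp (commSub_le_ker_sbLin hBr hx)])
    (fun _ hx ↦ by
      ext a
      simpa [Submodule.Quotient.mk_eq_zero] using commSub_le_comap (sb_mul_right hBr a) hx)

lemma trRep_mk (hBr : IsDoubleBracket 𝔽 V Br) (a b : V) :
    trRep hBr (Submodule.Quotient.mk a) b = sb Br a b :=
  rfl

lemma trBracket_mk (hBr : IsDoubleBracket 𝔽 V Br) (a b : V) :
    trBracket hBr (Submodule.Quotient.mk a) (Submodule.Quotient.mk b) =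
      Submodule.Quotient.mk (sb Br a b) :=
  rfl

lemma trBracket_eq_neg (hBr : IsDoubleBracket 𝔽 V Br) (hskew : IsSkew 𝔽 V Br)
    (x y : V ⧸ commSub 𝔽 V) : trBracket hBr x y = - trBracket hBr y x := by
  induction x using Submodule.Quotient.induction_on with | H a => ?_
  induction y using Submodule.Quotient.induction_on with | H b => ?_
  rw [trBracket_mk, trBracket_mk, eq_neg_iff_add_eq_zero, ← Submodule.Quotient.mk_add,
    Submodule.Quotient.mk_eq_zero]
  exact sb_add_sb_mem_commSub hskew a b

lemma trBracket_jacobi (hBr : IsDoubleBracket 𝔽 V Br) (hskew : IsSkew 𝔽 V Br)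
    (hJac : ∀ a b c : V, triple Br a b c = 0) (x y z : V ⧸ commSub 𝔽 V) :
    trBracket hBr x (trBracket hBr y z) - trBracket hBr y (trBracket hBr x z) =
      trBracket hBr (trBracket hBr x y) z := by
  induction x using Submodule.Quotient.induction_on with | H a => ?_
  induction y using Submodule.Quotient.induction_on with | H b => ?_
  induction z using Submodule.Quotient.induction_on with | H c => ?_
  simp only [trBracket_mk, ← Submodule.Quotient.mk_sub, sb_sb_sub_sb_sb hBr hskew hJac]

lemma trRep_mul (hBr : IsDoubleBracket 𝔽 V Br) (x : V ⧸ commSub 𝔽 V) (u w : V) :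
    trRep hBr x (u * w) = trRep hBr x u * w + u * trRep hBr x w := by
  induction x using Submodule.Quotient.induction_on with | H a => ?_
  simp only [trRep_mk, sb_mul_right hBr]

lemma trRep_trBracket (hBr : IsDoubleBracket 𝔽 V Br) (hskew : IsSkew 𝔽 V Br)
    (hJac : ∀ a b c : V, triple Br a b c = 0) (x y : V ⧸ commSub 𝔽 V) :
    trRep hBr x ∘ₗ trRep hBr y - trRep hBr y ∘ₗ trRep hBr x = trRep hBr (trBracket hBr x y) := by
  induction x using Submodule.Quotient.induction_on with | H a => ?_
  induction y using Submodule.Quotient.induction_on with | H b => ?_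
  ext c
  simp only [LinearMap.sub_apply, comp_apply, trBracket_mk, trRep_mk,
    sb_sb_sub_sb_sb hBr hskew hJac]

end Trace

theorem statement_8_general (𝔽 : Type) [Field 𝔽] (V : Type) [Ring V] [Algebra 𝔽 V]
    (Br : V →ₗ[𝔽] V →ₗ[𝔽] V ⊗[𝔽] V) (hBr : IsDoubleBracket 𝔽 V Br)
    (hskew : IsSkew 𝔽 V Br) (hJac : ∀ a b c : V, triple Br a b c = 0) :
    (∀ a b : V, sb Br a b + sb Br b a ∈ commSub 𝔽 V) ∧
    (∀ a b c : V, sb Br a (sb Br b c) - sb Br b (sb Br a c) = sb Br (sb Br a b) c) ∧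
    (∃ β : (V ⧸ commSub 𝔽 V) →ₗ[𝔽] (V ⧸ commSub 𝔽 V) →ₗ[𝔽] (V ⧸ commSub 𝔽 V),
      (∀ a b : V, β (Submodule.Quotient.mk a) (Submodule.Quotient.mk b) =
        Submodule.Quotient.mk (sb Br a b)) ∧
      (∀ x y, β x y = - β y x) ∧
      (∀ x y z, β x (β y z) - β y (β x z) = β (β x y) z) ∧
      (∃ ρ : (V ⧸ commSub 𝔽 V) →ₗ[𝔽] V →ₗ[𝔽] V,
        (∀ a b : V, ρ (Submodule.Quotient.mk a) b = sb Br a b) ∧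
        (∀ x, ∀ u w : V, ρ x (u * w) = ρ x u * w + u * ρ x w) ∧
        (∀ x y, ρ x ∘ₗ ρ y - ρ y ∘ₗ ρ x = ρ (β x y)))) :=
  ⟨sb_add_sb_mem_commSub hskew, sb_sb_sub_sb_sb hBr hskew hJac,
    trBracket hBr, trBracket_mk hBr, trBracket_eq_neg hBr hskew, trBracket_jacobi hBr hskew hJac,
    trRep hBr, trRep_mk hBr, trRep_mul hBr, trRep_trBracket hBr hskew hJac⟩

/-- for a double Poisson algebra (2-fold bracket + skewsymmetry + Jacobi)
and `{a,b} := m{{a,b}}`: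
(i) `{a,b} + {b,a} ∈ [V,V]`; (ii) `{a,{b,c}} − {b,{a,c}} = {{a,b},c}`;
consequently `V/[V,V]` is a Lie algebra with bracket `[tr a, tr b] = tr{a,b}`,
and `(tr a, b) ↦ {a,b}` is a representation of it on `V` by derivations. -/
theorem statement_8 (𝔽 : Type) [Field 𝔽] [CharZero 𝔽] (V : Type) [Ring V] [Algebra 𝔽 V]
    (Br : V →ₗ[𝔽] V →ₗ[𝔽] V ⊗[𝔽] V) (hBr : IsDoubleBracket 𝔽 V Br)
    (hskew : IsSkew 𝔽 V Br) (hJac : ∀ a b c : V, triple Br a b c = 0) :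
    (∀ a b : V, sb Br a b + sb Br b a ∈ commSub 𝔽 V) ∧
    (∀ a b c : V, sb Br a (sb Br b c) - sb Br b (sb Br a c) = sb Br (sb Br a b) c) ∧
    (∃ β : (V ⧸ commSub 𝔽 V) →ₗ[𝔽] (V ⧸ commSub 𝔽 V) →ₗ[𝔽] (V ⧸ commSub 𝔽 V),
      (∀ a b : V, β (Submodule.Quotient.mk a) (Submodule.Quotient.mk b) =
        Submodule.Quotient.mk (sb Br a b)) ∧
      (∀ x y, β x y = - β y x) ∧
      (∀ x y z, β x (β y z) - β y (β x z) = β (β x y) z) ∧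
      (∃ ρ : (V ⧸ commSub 𝔽 V) →ₗ[𝔽] V →ₗ[𝔽] V,
        (∀ a b : V, ρ (Submodule.Quotient.mk a) b = sb Br a b) ∧
        (∀ x, ∀ u w : V, ρ x (u * w) = ρ x u * w + u * ρ x w) ∧
        (∀ x y, ρ x ∘ₗ ρ y - ρ y ∘ₗ ρ x = ρ (β x y)))) :=
  statement_8_general 𝔽 V Br hBr hskew hJac
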